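/- arXiv:1611.04074 — 4 statements merged into one kernel-verified Lean document; each statement's English description precedes it below -/
import Mathlib

section
/- Let n ≥ 1 and let f_1, …, f_n : ℝ^d → ℝ each be convex and L_i-smooth, let f = (1/n)·Σ_{i=1}^n f_i, and let L_Q = max_i L_i. Then for all points x̃, x ∈ ℝ^d, (1/n)·Σ_{i=1}^n ‖∇f_i(x) − ∇f_i(x̃) + ∇f(x̃) − ∇f(x)‖² ≤ 2·L_Q·( f(x̃) − f(x) − ⟨∇f(x), x̃ − x⟩ ). (This is the variance bound for the SVRG-style stochastic gradient v = ∇f_{i}(x) − ∇f_{i}(x̃) + ∇f(x̃) when i is sampled uniformly from {1,…,n}.) -/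
/-!
Put `a i = ∇f_i(x) - ∇f_i(x̃)`. Since `∇f` is the average of the `∇f_i`, the vector
`b = ∇f(x) - ∇f(x̃)` is the mean of the `a i`, so `∑ ‖a i - b‖² ≤ ∑ ‖a i‖²`. Each `‖a i‖²` is at
most `2 L_i` times the Bregman divergence `f_i(x̃) - f_i(x) - ⟪∇f_i(x), x̃ - x⟫` (co-coercivity of
the gradient of a convex smooth function), and these divergences average to that of `f`.
-/

open RealInnerProductSpace

section Variance

variable {ι E : Type*} [NormedAddCommGroup E] [InnerProductSpace ℝ E]

theorem sum_norm_sub_sq_le_sum_norm_sq (s : Finset ι) (a : ι → E) {b : E}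
    (hb : ∑ i ∈ s, a i = (s.card : ℝ) • b) :
    ∑ i ∈ s, ‖a i - b‖ ^ 2 ≤ ∑ i ∈ s, ‖a i‖ ^ 2 := by
  have hexpand : ∑ i ∈ s, ‖a i - b‖ ^ 2 = ∑ i ∈ s, ‖a i‖ ^ 2 - s.card * ‖b‖ ^ 2 := by
    simp only [norm_sub_sq_real, Finset.sum_add_distrib, Finset.sum_sub_distrib,
      ← Finset.mul_sum, ← sum_inner, hb, real_inner_smul_left, real_inner_self_eq_norm_sq,
      Finset.sum_const, nsmul_eq_mul]
    ring
  rw [hexpand]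
  have : 0 ≤ (s.card : ℝ) * ‖b‖ ^ 2 := by positivity
  linarith

end Variance

section Smooth

variable {E : Type*} [NormedAddCommGroup E] [InnerProductSpace ℝ E] [CompleteSpace E]
  {g : E → ℝ} {x y : E}

theorem HasGradientAt.fun_sum {ι : Type*} {s : Finset ι} {f : ι → E → ℝ} {f' : ι → E}
    (h : ∀ i ∈ s, HasGradientAt (f i) (f' i) x) :
    HasGradientAt (fun z => ∑ i ∈ s, f i z) (∑ i ∈ s, f' i) x := by
  rw [hasGradientAt_iff_hasFDerivAt, map_sum]
  exact HasFDerivAt.fun_sum fun i hi => hasGradientAt_iff_hasFDerivAt.mp (h i hi)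

theorem HasGradientAt.const_mul {g' : E} (h : HasGradientAt g g' x) (c : ℝ) :
    HasGradientAt (fun z => c * g z) (c • g') x := by
  rw [hasGradientAt_iff_hasFDerivAt, map_smul]
  exact (hasGradientAt_iff_hasFDerivAt.mp h).const_mul c

theorem HasGradientAt.hasDerivAt_comp_add_smul {g' v : E} {t : ℝ}
    (h : HasGradientAt g g' (x + t • v)) :
    HasDerivAt (fun s : ℝ => g (x + s • v)) ⟪g', v⟫ t := by
  have hline : HasDerivAt (fun s : ℝ => x + s • v) v t := by
    simpa using ((hasDerivAt_id t).smul_const v).const_add x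
  refine ((hasGradientAt_iff_hasFDerivAt.mp h).comp_hasDerivAt t hline).congr_deriv ?_
  simp [InnerProductSpace.toDual_apply_apply]

theorem ConvexOn.add_inner_gradient_le {s : Set E} (hc : ConvexOn ℝ s g) (hx : x ∈ s)
    (hy : y ∈ s) (hd : DifferentiableAt ℝ g x) :
    g x + ⟪gradient g x, y - x⟫ ≤ g y := by
  have hline : ConvexOn ℝ (AffineMap.lineMap x y ⁻¹' s) (fun t : ℝ => g (x + t • (y - x))) := by
    simpa [Function.comp_def, AffineMap.lineMap_apply_module', add_comm] using
      hc.comp_affineMap (AffineMap.lineMap x y)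
  have hderiv : HasDerivAt (fun t : ℝ => g (x + t • (y - x))) ⟪gradient g x, y - x⟫ 0 :=
    HasGradientAt.hasDerivAt_comp_add_smul (by simpa using hd.hasGradientAt)
  have := hline.le_slope_of_hasDerivAt (by simpa using hx) (by simpa using hy) one_pos hderiv
  simp only [slope_def_field, one_smul, zero_smul, add_zero, add_sub_cancel] at this
  linarith

theorem le_add_inner_gradient_add_sq (hd : Differentiable ℝ g) {L : ℝ}
    (hs : ∀ u v, ‖gradient g u - gradient g v‖ ≤ L * ‖u - v‖) (x y : E) :
    g y ≤ g x + ⟪gradient g x, y - x⟫ + L / 2 * ‖y - x‖ ^ 2 := by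
  set v := y - x
  set c := ⟪gradient g x, v⟫
  let ψ : ℝ → ℝ := fun t => g (x + t • v) - t * c - L / 2 * ‖v‖ ^ 2 * t ^ 2
  have hψ : ∀ t, HasDerivAt ψ (⟪gradient g (x + t • v), v⟫ - c - L * ‖v‖ ^ 2 * t) t := by
    intro t
    have hquad := ((hasDerivAt_id t).pow 2).const_mul (L / 2 * ‖v‖ ^ 2)
    refine (((hd _).hasGradientAt.hasDerivAt_comp_add_smul).sub
      ((hasDerivAt_id t).mul_const c)).sub hquad |>.congr_deriv ?_
    simp only [id, Nat.cast_ofNat]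
    ring
  have hψ' : ∀ t ∈ interior (Set.Ici (0 : ℝ)), deriv ψ t ≤ 0 := by
    intro t ht
    rw [interior_Ici, Set.mem_Ioi] at ht
    have hgrowth : ⟪gradient g (x + t • v) - gradient g x, v⟫ ≤ L * ‖v‖ ^ 2 * t :=
      calc ⟪gradient g (x + t • v) - gradient g x, v⟫
          ≤ ‖gradient g (x + t • v) - gradient g x‖ * ‖v‖ := real_inner_le_norm _ _
        _ ≤ L * ‖x + t • v - x‖ * ‖v‖ := by gcongr; exact hs _ _
        _ = L * ‖v‖ ^ 2 * t := by
          rw [add_sub_cancel_left, norm_smul, Real.norm_of_nonneg ht.le]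
          ring
    rw [(hψ t).deriv]
    rw [inner_sub_left] at hgrowth
    linarith
  have hanti : AntitoneOn ψ (Set.Ici 0) :=
    antitoneOn_of_deriv_nonpos (convex_Ici 0) (fun t _ => (hψ t).continuousAt.continuousWithinAt)
      (fun t _ => (hψ t).differentiableAt.differentiableWithinAt) hψ'
  have h10 : ψ 1 ≤ ψ 0 := hanti (by simp) (by simp) zero_le_one
  simp only [ψ, one_smul, zero_smul, add_zero, one_mul, zero_mul, one_pow, mul_one, sub_zero,
    v, add_sub_cancel] at h10
  linarith


theorem norm_gradient_sub_sq_le (hc : ConvexOn ℝ Set.univ g) (hd : Differentiable ℝ g) {L : ℝ}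
    (hs : ∀ u v, ‖gradient g u - gradient g v‖ ≤ L * ‖u - v‖) (x y : E) :
    ‖gradient g y - gradient g x‖ ^ 2 ≤ 2 * L * (g y - g x - ⟪gradient g x, y - x⟫) := by
  rcases eq_or_ne y x with rfl | hyx
  · simp
  have hL : 0 ≤ L := nonneg_of_mul_nonneg_left ((norm_nonneg _).trans (hs y x))
    (norm_pos_iff.mpr (sub_ne_zero.mpr hyx))
  set w := gradient g y - gradient g x
  rcases hL.eq_or_lt with rfl | hLpos
  · have hw : ‖w‖ ≤ 0 := by simpa using hs y x
    nlinarith [norm_nonneg w]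
  -- Compare `g` at `y - L⁻¹ • w` from below by convexity at `x` and from above by smoothness at `y`.
  set z := y - L⁻¹ • w
  have hlower := hc.add_inner_gradient_le (Set.mem_univ x) (Set.mem_univ z) (hd x)
  have hupper := le_add_inner_gradient_add_sq hd hs y z
  have hzx : z - x = (y - x) - L⁻¹ • w := by simp only [z]; abel
  have hzy : z - y = -(L⁻¹ • w) := by simp only [z]; abel
  have hw : ⟪gradient g y, w⟫ - ⟪gradient g x, w⟫ = ‖w‖ ^ 2 := by
    rw [← inner_sub_left, real_inner_self_eq_norm_sq]
  have hquad : L / 2 * ‖z - y‖ ^ 2 = ‖w‖ ^ 2 / (2 * L) := by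
    rw [hzy, norm_neg, norm_smul, Real.norm_of_nonneg (inv_nonneg.mpr hL)]
    field_simp
  rw [hzx, inner_sub_right, real_inner_smul_right] at hlower
  rw [hquad, hzy, inner_neg_right, real_inner_smul_right] at hupper
  have key : ‖w‖ ^ 2 / (2 * L) ≤ g y - g x - ⟪gradient g x, y - x⟫ := by
    have : L⁻¹ * ⟪gradient g y, w⟫ - L⁻¹ * ⟪gradient g x, w⟫ = 2 * (‖w‖ ^ 2 / (2 * L)) := by
      rw [← mul_sub, hw]
      field_simp
    linarith
  rwa [div_le_iff₀ (by positivity), mul_comm] at key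

end Smooth

/-- Variance bound for the SVRG-style stochastic gradient. -/
theorem stmt_0 (d n : ℕ) (hn : 1 ≤ n)
    (f : Fin n → EuclideanSpace ℝ (Fin d) → ℝ) (L : Fin n → ℝ)
    (hconv : ∀ i, ConvexOn ℝ Set.univ (f i))
    (hdiff : ∀ i, Differentiable ℝ (f i))
    (hsmooth : ∀ i, ∀ u v, ‖gradient (f i) u - gradient (f i) v‖ ≤ L i * ‖u - v‖)
    (F : EuclideanSpace ℝ (Fin d) → ℝ)
    (hF : F = fun x => (1 / (n : ℝ)) * ∑ i, f i x)
    (LQ : ℝ)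
    (hLQ : LQ = Finset.univ.sup' (Finset.univ_nonempty_iff.mpr ⟨⟨0, hn⟩⟩) L)
    (xt x : EuclideanSpace ℝ (Fin d)) :
    (1 / (n : ℝ)) *
        ∑ i, ‖gradient (f i) x - gradient (f i) xt + gradient F xt - gradient F x‖ ^ 2
      ≤ 2 * LQ * (F xt - F x - ⟪gradient F x, xt - x⟫) := by
  have hgradF : ∀ z, gradient F z = (1 / (n : ℝ)) • ∑ i, gradient (f i) z := fun z => by
    subst hF
    exact (HasGradientAt.fun_sum fun i _ => (hdiff i z).hasGradientAt).const_mul _ |>.gradient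
  set a := fun i => gradient (f i) x - gradient (f i) xt
  set b := gradient F x - gradient F xt with hb
  set D := fun i => f i xt - f i x - ⟪gradient (f i) x, xt - x⟫
  have hmean : ∑ i, a i = (n : ℝ) • b := by
    rw [hb, hgradF, hgradF, ← smul_sub, ← Finset.sum_sub_distrib, smul_smul,
      mul_one_div_cancel (Nat.cast_ne_zero.mpr (by omega)), one_smul]
  have hbregman : F xt - F x - ⟪gradient F x, xt - x⟫ = (1 / (n : ℝ)) * ∑ i, D i := by
    rw [hgradF, real_inner_smul_left, sum_inner, hF]
    simp only [D, Finset.sum_sub_distrib]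
    ring
  have hterm : ∀ i, ‖a i‖ ^ 2 ≤ 2 * LQ * D i := fun i => calc
    ‖a i‖ ^ 2 ≤ 2 * L i * D i := by
      rw [norm_sub_rev]; exact norm_gradient_sub_sq_le (hconv i) (hdiff i) (hsmooth i) x xt
    _ ≤ 2 * LQ * D i := by
      have := (hconv i).add_inner_gradient_le (Set.mem_univ x) (Set.mem_univ xt) (hdiff i x)
      gcongr
      · simp only [D]; linarith
      · exact hLQ ▸ Finset.le_sup' L (Finset.mem_univ i)
  have hshift : ∀ i, gradient (f i) x - gradient (f i) xt + gradient F xt - gradient F x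
      = a i - b := fun i => by simp only [a, b]; abel
  simp only [hshift]
  calc (1 / (n : ℝ)) * ∑ i, ‖a i - b‖ ^ 2
      ≤ (1 / (n : ℝ)) * ∑ i, ‖a i‖ ^ 2 := by
        gcongr ?_ * ?_; exact sum_norm_sub_sq_le_sum_norm_sq _ a (by simpa using hmean)
    _ ≤ (1 / (n : ℝ)) * ∑ i, 2 * LQ * D i := by gcongr with i; exact hterm i
    _ = 2 * LQ * (F xt - F x - ⟪gradient F x, xt - x⟫) := by
        rw [hbregman, ← Finset.mul_sum]; ring
end

section
/- Let f : ℝ^d → ℝ be L_f-smooth, let L_Q > 0, and let α₁, α₂, α₃ ∈ (0,1) with α₁ + α₂ + α₃ = 1. Given points x^{ag}, x_{prev}, x_{new}, x̃, x ∈ ℝ^d and an arbitrary vector v ∈ ℝ^d, set x^{md} = α₁·x^{ag} + α₂·x_{prev} + α₃·x̃ and x^{ag+} = α₁·x^{ag} + α₂·x_{new} + α₃·x̃. Then f(x^{ag+}) ≤ α₁·( f(x^{md}) + ⟨v, x^{ag} − x^{md}⟩ ) + α₂·( f(x^{md}) + ⟨v, x − x^{md}⟩ ) + α₃·( f(x^{md})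 + ⟨v, x̃ − x^{md}⟩ + (1/(2·L_Q))·‖∇f(x^{md}) − v‖² ) + α₂·⟨v, x_{new} − x⟩ + (α₂²/2)·( L_Q/α₃ + L_f )·‖x_{new} − x_{prev}‖². -/
/-!
With `w = α₂ • (xnew - xprev)` we have `xagp = xmd + w`, so the descent lemma for the
`Lf`-smooth `f` bounds `f xagp` by `f xmd + ⟪∇f xmd, w⟫ + Lf/2 ‖w‖²`. Splitting
`⟪∇f xmd, w⟫ = ⟪v, w⟫ + ⟪∇f xmd - v, w⟫` and applying Young's inequality with weight `α₃ / LQ`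
to the second term gives the claim, because the convex combination of the linear terms on the
right-hand side collapses to `⟪v, w⟫`.
-/

open RealInnerProductSpace

section Descent

variable {E : Type*} [NormedAddCommGroup E] [InnerProductSpace ℝ E] [CompleteSpace E]
  {f : E → ℝ}

theorem DifferentiableAt.hasDerivAt_comp_add_smul {x w : E} {t : ℝ}
    (hf : DifferentiableAt ℝ f (x + t • w)) :
    HasDerivAt (fun s : ℝ => f (x + s • w)) ⟪gradient f (x + t • w), w⟫ t := by
  have hline : HasDerivAt (fun s : ℝ => x + s • w) w t := by
    simpa using ((hasDerivAt_id t).smul_const w).const_add x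
  simpa [Function.comp_def] using hf.hasGradientAt.hasFDerivAt.comp_hasDerivAt t hline

theorem le_add_inner_gradient_add_sq_of_lipschitz_gradient {L : ℝ} (hf : Differentiable ℝ f)
    (hL : ∀ u v, ‖gradient f u - gradient f v‖ ≤ L * ‖u - v‖) (x w : E) :
    f (x + w) ≤ f x + ⟪gradient f x, w⟫ + L / 2 * ‖w‖ ^ 2 := by
  set φ : ℝ → ℝ := fun t => f (x + t • w) - t * ⟪gradient f x, w⟫ - t ^ 2 / 2 * (L * ‖w‖ ^ 2)
  have hφ : ∀ t, HasDerivAt φ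
      (⟪gradient f (x + t • w) - gradient f x, w⟫ - t * (L * ‖w‖ ^ 2)) t := by
    intro t
    have hsq : HasDerivAt (fun s : ℝ => s ^ 2 / 2 * (L * ‖w‖ ^ 2)) (t * (L * ‖w‖ ^ 2)) t := by
      simpa using ((hasDerivAt_pow 2 t).div_const 2).mul_const (L * ‖w‖ ^ 2)
    rw [inner_sub_left]
    exact ((hf _).hasDerivAt_comp_add_smul.sub
      (by simpa using (hasDerivAt_id t).mul_const ⟪gradient f x, w⟫)).sub hsq
  have hanti : AntitoneOn φ (Set.Icc 0 1) := by
    refine antitoneOn_of_deriv_nonpos (convex_Icc 0 1)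
      (fun t _ => (hφ t).continuousAt.continuousWithinAt)
      (fun t _ => (hφ t).differentiableAt.differentiableWithinAt) fun t ht => ?_
    rw [interior_Icc] at ht
    rw [(hφ t).deriv, sub_nonpos]
    calc ⟪gradient f (x + t • w) - gradient f x, w⟫
        ≤ ‖gradient f (x + t • w) - gradient f x‖ * ‖w‖ := real_inner_le_norm _ _
      _ ≤ L * ‖t • w‖ * ‖w‖ := by
          gcongr
          simpa using hL (x + t • w) x
      _ = t * (L * ‖w‖ ^ 2) := by rw [norm_smul, Real.norm_of_nonneg ht.1.le]; ring
  have h01 := hanti (Set.left_mem_Icc.2 zero_le_one) (Set.right_mem_Icc.2 zero_le_one) zero_le_one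
  simp only [φ, one_smul, zero_smul, add_zero] at h01
  linarith

end Descent

theorem real_inner_le_mul_norm_sq_add_div {E : Type*} [NormedAddCommGroup E]
    [InnerProductSpace ℝ E] {c : ℝ} (hc : 0 < c) (a b : E) :
    ⟪a, b⟫ ≤ c / 2 * ‖a‖ ^ 2 + 1 / (2 * c) * ‖b‖ ^ 2 := by
  have h := norm_sub_sq_real (c • a) b
  rw [norm_smul, real_inner_smul_left, Real.norm_of_nonneg hc.le] at h
  have hrhs : c / 2 * ‖a‖ ^ 2 + 1 / (2 * c) * ‖b‖ ^ 2
      = (c ^ 2 * ‖a‖ ^ 2 + ‖b‖ ^ 2) / (2 * c) := by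
    field_simp
  rw [hrhs, le_div_iff₀ (by positivity)]
  linarith [sq_nonneg ‖c • a - b‖]

theorem stmt_2_general (d : ℕ) (f : EuclideanSpace ℝ (Fin d) → ℝ) (Lf LQ : ℝ) (hLQ : 0 < LQ)
    (hdiff : Differentiable ℝ f)
    (hsmooth : ∀ u v', ‖gradient f u - gradient f v'‖ ≤ Lf * ‖u - v'‖)
    (α₁ α₂ α₃ : ℝ)
    (hα₃ : α₃ ∈ Set.Ioo (0 : ℝ) 1) (hsum : α₁ + α₂ + α₃ = 1)
    (xag xprev xnew xt x v : EuclideanSpace ℝ (Fin d))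
    (xmd : EuclideanSpace ℝ (Fin d)) (hxmd : xmd = α₁ • xag + α₂ • xprev + α₃ • xt)
    (xagp : EuclideanSpace ℝ (Fin d)) (hxagp : xagp = α₁ • xag + α₂ • xnew + α₃ • xt) :
    f xagp ≤ α₁ * (f xmd + ⟪v, xag - xmd⟫) + α₂ * (f xmd + ⟪v, x - xmd⟫)
      + α₃ * (f xmd + ⟪v, xt - xmd⟫ + (1 / (2 * LQ)) * ‖gradient f xmd - v‖ ^ 2)
      + α₂ * ⟪v, xnew - x⟫
      + (α₂ ^ 2 / 2) * (LQ / α₃ + Lf) * ‖xnew - xprev‖ ^ 2 := by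
  set w := α₂ • (xnew - xprev)
  have hstep : xagp = xmd + w := by rw [hxmd, hxagp]; module
  have hdescent := le_add_inner_gradient_add_sq_of_lipschitz_gradient hdiff hsmooth xmd w
  have hyoung := real_inner_le_mul_norm_sq_add_div (div_pos hα₃.1 hLQ) (gradient f xmd - v) w
  have hnorm : ‖w‖ ^ 2 = α₂ ^ 2 * ‖xnew - xprev‖ ^ 2 := by
    rw [norm_smul, mul_pow, Real.norm_eq_abs, sq_abs]
  have hw : α₁ • (xag - xmd) + α₂ • (x - xmd) + α₃ • (xt - xmd) + α₂ • (xnew - x) = w := by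
    rw [hxmd, show α₁ = 1 - α₂ - α₃ by linarith]; module
  have hlin : α₁ * ⟪v, xag - xmd⟫ + α₂ * ⟪v, x - xmd⟫ + α₃ * ⟪v, xt - xmd⟫
      + α₂ * ⟪v, xnew - x⟫ = ⟪v, w⟫ := by
    simp only [← hw, inner_add_right, real_inner_smul_right]
  calc f xagp ≤ f xmd + ⟪gradient f xmd, w⟫ + Lf / 2 * ‖w‖ ^ 2 := hstep ▸ hdescent
    _ = f xmd + ⟪v, w⟫ + ⟪gradient f xmd - v, w⟫ + Lf / 2 * ‖w‖ ^ 2 := by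
      rw [inner_sub_left]; ring
    _ ≤ f xmd + ⟪v, w⟫ + (α₃ / LQ / 2 * ‖gradient f xmd - v‖ ^ 2
          + 1 / (2 * (α₃ / LQ)) * ‖w‖ ^ 2) + Lf / 2 * ‖w‖ ^ 2 := by gcongr
    _ = _ := by
      rw [← hlin, hnorm, mul_div_assoc', one_div_div]
      linear_combination (-(f xmd)) * hsum

/-- One-step descent-type inequality with auxiliary points. -/
theorem stmt_2 (d : ℕ) (f : EuclideanSpace ℝ (Fin d) → ℝ) (Lf LQ : ℝ) (hLQ : 0 < LQ)
    (hdiff : Differentiable ℝ f)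
    (hsmooth : ∀ u v', ‖gradient f u - gradient f v'‖ ≤ Lf * ‖u - v'‖)
    (α₁ α₂ α₃ : ℝ) (hα₁ : α₁ ∈ Set.Ioo (0 : ℝ) 1) (hα₂ : α₂ ∈ Set.Ioo (0 : ℝ) 1)
    (hα₃ : α₃ ∈ Set.Ioo (0 : ℝ) 1) (hsum : α₁ + α₂ + α₃ = 1)
    (xag xprev xnew xt x v : EuclideanSpace ℝ (Fin d))
    (xmd : EuclideanSpace ℝ (Fin d)) (hxmd : xmd = α₁ • xag + α₂ • xprev + α₃ • xt)
    (xagp : EuclideanSpace ℝ (Fin d)) (hxagp : xagp = α₁ • xag + α₂ • xnew + α₃ • xt) :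
    f xagp ≤ α₁ * (f xmd + ⟪v, xag - xmd⟫) + α₂ * (f xmd + ⟪v, x - xmd⟫)
      + α₃ * (f xmd + ⟪v, xt - xmd⟫ + (1 / (2 * LQ)) * ‖gradient f xmd - v‖ ^ 2)
      + α₂ * ⟪v, xnew - x⟫
      + (α₂ ^ 2 / 2) * (LQ / α₃ + Lf) * ‖xnew - xprev‖ ^ 2 :=
  stmt_2_general d f Lf LQ hLQ hdiff hsmooth α₁ α₂ α₃ hα₃ hsum xag xprev xnew xt x v xmd hxmd xagp
    hxagp
end

section
/- Let s ≥ 1 be a natural number and suppose α₁ ∈ (0,1), α₂ ∈ (0, 2/(2+s)], α₃ ∈ (0,1) with α₁ + α₂ + α₃ = 1. Define α₂' = h(α₂), α₁' = α₁·(1 − α₂'), α₃' = (1 − α₁)·(1 − α₂'). Then α₁' ∈ (0, α₁), α₂' ∈ (0, min{α₂, 2/(s+3)}), α₃' ∈ (α₃, 1), and α₁' + α₂' + α₃' = 1. -/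
/-!
`k = h a` is the positive root of `k² + a² k = a²`, i.e. `k² = a² (1 - k)`. This gives
`0 < k < 1` and `k < a`, and if `0 < a ≤ 2 / t` then `k² t² ≤ 4 (1 - k) < (2 - k)²`, so
`k < 2 / (t + 1)`. The bounds on `α₁'` and `α₃'` follow by eliminating `α₃ = 1 - α₁ - α₂`.
-/

/-- `h(a) = (√(a⁴ + 4a²) − a²)/2`. -/
noncomputable def h (a : ℝ) : ℝ := (Real.sqrt (a ^ 4 + 4 * a ^ 2) - a ^ 2) / 2

theorem h_sq_add_sq_mul (a : ℝ) : h a ^ 2 + a ^ 2 * h a = a ^ 2 := by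
  have hsqrt : Real.sqrt (a ^ 4 + 4 * a ^ 2) ^ 2 = a ^ 4 + 4 * a ^ 2 :=
    Real.sq_sqrt (by positivity)
  unfold h
  linear_combination hsqrt / 4

theorem h_pos {a : ℝ} (ha : a ≠ 0) : 0 < h a := by
  have : a ^ 2 < Real.sqrt (a ^ 4 + 4 * a ^ 2) :=
    (Real.lt_sqrt (sq_nonneg a)).2 (by nlinarith [pow_pos (sq_pos_of_ne_zero ha) 1])
  unfold h
  linarith

theorem h_lt_one (a : ℝ) : h a < 1 := by
  have : Real.sqrt (a ^ 4 + 4 * a ^ 2) < a ^ 2 + 2 :=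
    (Real.sqrt_lt' (by positivity)).2 (by nlinarith)
  unfold h
  linarith

theorem h_lt_self {a : ℝ} (ha : 0 < a) : h a < a := by
  have hk := h_pos ha.ne'
  refine lt_of_pow_lt_pow_left₀ 2 ha.le ?_
  nlinarith [h_sq_add_sq_mul a, mul_pos (pow_pos ha 2) hk]

theorem h_lt_two_div_add_one {a t : ℝ} (ht : 0 < t) (ha₀ : 0 < a) (ha : a ≤ 2 / t) :
    h a < 2 / (t + 1) := by
  have hk := h_pos ha₀.ne'
  have hk1 := h_lt_one a
  have hat : (a * t) ^ 2 ≤ 2 ^ 2 :=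
    pow_le_pow_left₀ (by positivity) ((le_div_iff₀ ht).1 ha) 2
  have hsq : (h a * t) ^ 2 < (2 - h a) ^ 2 := by
    have : (h a * t) ^ 2 = (a * t) ^ 2 * (1 - h a) := by
      linear_combination t ^ 2 * h_sq_add_sq_mul a
    rw [this]
    nlinarith [mul_le_mul_of_nonneg_right hat (sub_nonneg.2 hk1.le), pow_pos hk 2]
  have := lt_of_pow_lt_pow_left₀ 2 (by linarith) hsq
  rw [lt_div_iff₀ (by linarith)]
  linarith

theorem stmt_12_general (s : ℕ) (α₁ α₂ α₃ : ℝ)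
    (h1 : α₁ ∈ Set.Ioo (0 : ℝ) 1) (h2 : α₂ ∈ Set.Ioc (0 : ℝ) (2 / (2 + (s : ℝ))))
    (hsum : α₁ + α₂ + α₃ = 1)
    (α₁' α₂' α₃' : ℝ) (hd2 : α₂' = h α₂) (hd1 : α₁' = α₁ * (1 - α₂'))
    (hd3 : α₃' = (1 - α₁) * (1 - α₂')) :
    α₁' ∈ Set.Ioo 0 α₁ ∧ α₂' ∈ Set.Ioo 0 (min α₂ (2 / ((s : ℝ) + 3)))
      ∧ α₃' ∈ Set.Ioo α₃ 1 ∧ α₁' + α₂' + α₃' = 1 := by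
  obtain ⟨hα₁, -⟩ := h1
  obtain ⟨hα₂, hα₂s⟩ := h2
  have hk : 0 < α₂' := hd2 ▸ h_pos hα₂.ne'
  have hk1 : α₂' < 1 := hd2 ▸ h_lt_one α₂
  have hka : α₂' < α₂ := hd2 ▸ h_lt_self hα₂
  have hks : α₂' < 2 / ((s : ℝ) + 3) := by
    have := h_lt_two_div_add_one (t := s + 2) (by positivity) hα₂ (by rwa [add_comm])
    rwa [hd2, show (s : ℝ) + 3 = s + 2 + 1 by ring]
  subst hd1 hd3
  have hα₁k : 0 < α₁ * (1 - α₂') := mul_pos hα₁ (by linarith)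
  refine ⟨⟨hα₁k, mul_lt_of_lt_one_right hα₁ (by linarith)⟩, ⟨hk, lt_min hka hks⟩, ⟨?_, ?_⟩, by ring⟩
  · -- `α₃' - α₃ = (α₂ - α₂') + α₁ α₂'`
    nlinarith [mul_pos hα₁ hk]
  · nlinarith

/-- One step of the ASVRG-ADMM weight-parameter update preserves the invariants. -/
theorem stmt_12 (s : ℕ) (hs : 1 ≤ s) (α₁ α₂ α₃ : ℝ)
    (h1 : α₁ ∈ Set.Ioo (0 : ℝ) 1) (h2 : α₂ ∈ Set.Ioc (0 : ℝ) (2 / (2 + (s : ℝ))))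
    (h3 : α₃ ∈ Set.Ioo (0 : ℝ) 1) (hsum : α₁ + α₂ + α₃ = 1)
    (α₁' α₂' α₃' : ℝ) (hd2 : α₂' = h α₂) (hd1 : α₁' = α₁ * (1 - α₂'))
    (hd3 : α₃' = (1 - α₁) * (1 - α₂')) :
    α₁' ∈ Set.Ioo 0 α₁ ∧ α₂' ∈ Set.Ioo 0 (min α₂ (2 / ((s : ℝ) + 3)))
      ∧ α₃' ∈ Set.Ioo α₃ 1 ∧ α₁' + α₂' + α₃' = 1 :=
  stmt_12_general s α₁ α₂ α₃ h1 h2 hsum α₁' α₂' α₃' hd2 hd1 hd3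
end

section
/- Let α₁ ∈ ℝ and α₂ > 0, and define α₂' = h(α₂), α₁' = α₁·(1 − α₂'), α₃' = (1 − α₁)·(1 − α₂'). Then α₂' > 0 and the parameter-update rules satisfy the two constraint identities used in the ASVRG-ADMM analysis: 1/α₂² = (1 − α₂')/(α₂')², and (1 − α₁)/α₂² = α₃'/(α₂')². -/
theorem h_sq_eq (a : ℝ) : h a ^ 2 = a ^ 2 * (1 - h a) := by
  have hs := Real.sq_sqrt (by positivity : (0 : ℝ) ≤ a ^ 4 + 4 * a ^ 2)
  unfold h
  linear_combination hs / 4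

theorem one_div_sq_eq_one_sub_h_div_sq {a : ℝ} (ha : a ≠ 0) :
    1 / a ^ 2 = (1 - h a) / h a ^ 2 := by
  rw [div_eq_div_iff (pow_ne_zero 2 ha) (pow_ne_zero 2 (h_pos ha).ne'), h_sq_eq]
  ring

theorem stmt_17_general (α₁ α₂ : ℝ) (hα₂ : 0 < α₂)
    (α₂' α₃' : ℝ) (hd2 : α₂' = h α₂)
    (hd3 : α₃' = (1 - α₁) * (1 - α₂')) :
    0 < α₂' ∧ 1 / α₂ ^ 2 = (1 - α₂') / α₂' ^ 2 ∧
      (1 - α₁) / α₂ ^ 2 = α₃' / α₂' ^ 2 := by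
  subst hd2 hd3
  have key := one_div_sq_eq_one_sub_h_div_sq hα₂.ne'
  refine ⟨h_pos hα₂.ne', key, ?_⟩
  rw [div_eq_mul_one_div, key, mul_div_assoc]

/-- The parameter-update rules satisfy the two constraint identities used in the
ASVRG-ADMM analysis. -/
theorem stmt_17 (α₁ α₂ : ℝ) (hα₂ : 0 < α₂)
    (α₁' α₂' α₃' : ℝ) (hd2 : α₂' = h α₂) (hd1 : α₁' = α₁ * (1 - α₂'))
    (hd3 : α₃' = (1 - α₁) * (1 - α₂')) :
    0 < α₂' ∧ 1 / α₂ ^ 2 = (1 - α₂') / α₂' ^ 2 ∧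
      (1 - α₁) / α₂ ^ 2 = α₃' / α₂' ^ 2 :=
  stmt_17_general α₁ α₂ hα₂ α₂' α₃' hd2 hd3
end
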